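/- Let n be a positive integer and let D ∈ S^n be a symmetric matrix with zero diagonal such that B(D) = -(1/2) J D J is positive semidefinite, where J = I_n - (1/n)𝟏𝟏^T. Let s be the rank of B(D). Then there exist points y_1, ..., y_n ∈ ℝ^s such that ‖y_i - y_j‖^2 = D_{ij} for all i, j and the points are centered, i.e., y_1 + y_2 + ... + y_n = 0. -/

import Mathlib

/-!
Spectral factorization writes the positive semidefinite matrix `B = B(D)` as a Gram matrix
`B i j = ⟪y i, y j⟫` of vectors in `ℝ^(rank B)`: take `y i = (√λₖ · Vᵢₖ)ₖ` over the nonzero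
eigenvalues `λₖ` of `B`. Then `‖y i - y j‖² = B i i + B j j - 2 B i j`, which equals `D i j`
because `D` is symmetric with zero diagonal, and `‖∑ i, y i‖² = 𝟏ᵀ B 𝟏 = 0` because `J 𝟏 = 0`.
-/

open Matrix

/-- The centering matrix `J = I - (1/k) 𝟏𝟏ᵀ`. -/
noncomputable def centeringMatrix (k : ℕ) : Matrix (Fin k) (Fin k) ℝ :=
  1 - (k : ℝ)⁻¹ • Matrix.of (fun _ _ => (1 : ℝ))

/-- The double-centered matrix `B(D) = -(1/2) J D J`. -/
noncomputable def doubleCenter {k : ℕ} (D : Matrix (Fin k) (Fin k) ℝ) :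
    Matrix (Fin k) (Fin k) ℝ :=
  (-(1/2) : ℝ) • (centeringMatrix k * D * centeringMatrix k)

open scoped InnerProductSpace

namespace Matrix

section Gram

variable {ι E : Type*} [NormedAddCommGroup E] [InnerProductSpace ℝ E]

theorem sum_sum_gram [Fintype ι] (v : ι → E) :
    ∑ i, ∑ j, gram ℝ v i j = ⟪∑ i, v i, ∑ j, v j⟫_ℝ := by
  simp only [gram_apply, sum_inner]
  exact Finset.sum_congr rfl fun i _ => (inner_sum _ _ _).symm

theorem norm_sub_sq_eq_gram (v : ι → E) (i j : ι) :
    ‖v i - v j‖ ^ 2 = gram ℝ v i i + gram ℝ v j j - 2 * gram ℝ v i j := by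
  rw [norm_sub_sq_real, gram_apply, gram_apply, gram_apply, real_inner_self_eq_norm_sq,
    real_inner_self_eq_norm_sq]
  ring

end Gram

section Spectral

variable {ι : Type*} [Fintype ι] [DecidableEq ι] {A : Matrix ι ι ℝ}

theorem IsHermitian.apply_eq_sum_eigenvalues (hA : A.IsHermitian) (i j : ι) :
    A i j = ∑ k, hA.eigenvalues k * hA.eigenvectorBasis k i * hA.eigenvectorBasis k j := by
  conv_lhs => rw [hA.spectral_theorem, Unitary.conjStarAlgAut_apply, mul_apply]
  simp [mul_diagonal, mul_comm]

theorem PosSemidef.exists_gram_eq (hA : A.PosSemidef) :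
    ∃ v : ι → EuclideanSpace ℝ (Fin A.rank), gram ℝ v = A := by
  set hH := hA.isHermitian
  set V := hH.eigenvectorBasis
  let w : ι → EuclideanSpace ℝ {k // hH.eigenvalues k ≠ 0} := fun i =>
    WithLp.toLp 2 fun k => √(hH.eigenvalues k) * V k i
  let e : {k // hH.eigenvalues k ≠ 0} ≃ Fin A.rank :=
    Fintype.equivFinOfCardEq hH.rank_eq_card_non_zero_eigs.symm
  refine ⟨fun i => LinearIsometryEquiv.piLpCongrLeft 2 ℝ ℝ e (w i), ?_⟩
  ext i j
  have hsqrt (k : ι) : √(hH.eigenvalues k) * √(hH.eigenvalues k) = hH.eigenvalues k :=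
    Real.mul_self_sqrt (hA.eigenvalues_nonneg k)
  calc gram ℝ _ i j = ⟪w i, w j⟫_ℝ := by rw [gram_apply, LinearIsometryEquiv.inner_map_map]
    _ = ∑ k : {k // hH.eigenvalues k ≠ 0}, hH.eigenvalues k * V k i * V k j := by
      simp only [w, PiLp.inner_apply, RCLike.inner_apply, conj_trivial]
      exact Finset.sum_congr rfl fun k _ => by linear_combination V k i * V k j * hsqrt k
    _ = ∑ k with hH.eigenvalues k ≠ 0, hH.eigenvalues k * V k i * V k j :=
      (Finset.sum_subtype _ (fun k => Finset.mem_filter_univ k)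
        fun k => hH.eigenvalues k * V k i * V k j).symm
    _ = ∑ k, hH.eigenvalues k * V k i * V k j :=
      Finset.sum_filter_of_ne fun k _ h hk => h (by rw [hk, zero_mul, zero_mul])
    _ = A i j := (hH.apply_eq_sum_eigenvalues i j).symm

end Spectral

end Matrix

section DoubleCentering

variable {k : ℕ}

theorem centeringMatrix_mulVec_one : centeringMatrix k *ᵥ 1 = 0 := by
  ext i
  have hk : (k : ℝ) ≠ 0 := Nat.cast_ne_zero.mpr i.pos.ne'
  rw [centeringMatrix, sub_mulVec, one_mulVec, smul_mulVec]
  simp [mulVec, dotProduct, hk]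

theorem doubleCenter_mulVec_one (D : Matrix (Fin k) (Fin k) ℝ) : doubleCenter D *ᵥ 1 = 0 := by
  rw [doubleCenter, smul_mulVec, ← mulVec_mulVec, centeringMatrix_mulVec_one,
    mulVec_zero, smul_zero]

theorem sum_sum_doubleCenter (D : Matrix (Fin k) (Fin k) ℝ) :
    ∑ i, ∑ j, doubleCenter D i j = 0 := by
  have hrow (i : Fin k) : ∑ j, doubleCenter D i j = 0 := by
    simpa [mulVec, dotProduct] using congrFun (doubleCenter_mulVec_one D) i
  simp only [hrow, Finset.sum_const_zero]

theorem centeringMatrix_mul_apply (M : Matrix (Fin k) (Fin k) ℝ) (i j : Fin k) :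
    (centeringMatrix k * M) i j = M i j - (k : ℝ)⁻¹ * ∑ l, M l j := by
  rw [centeringMatrix, sub_mul, Matrix.one_mul, smul_mul]
  simp [mul_apply, Finset.mul_sum]

theorem mul_centeringMatrix_apply (M : Matrix (Fin k) (Fin k) ℝ) (i j : Fin k) :
    (M * centeringMatrix k) i j = M i j - (k : ℝ)⁻¹ * ∑ l, M i l := by
  rw [centeringMatrix, mul_sub, Matrix.mul_one, Matrix.mul_smul]
  simp [mul_apply, Finset.sum_mul, mul_comm]

theorem doubleCenter_diag_add_diag_sub_two_mul {D : Matrix (Fin k) (Fin k) ℝ} (hsym : D.IsSymm)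
    (hdiag : ∀ i, D i i = 0) (i j : Fin k) :
    doubleCenter D i i + doubleCenter D j j - 2 * doubleCenter D i j = D i j := by
  have hcol (i : Fin k) : ∑ l, D l i = ∑ l, D i l := Finset.sum_congr rfl fun l _ => hsym.apply i l
  simp only [doubleCenter, Matrix.smul_apply, smul_eq_mul, mul_centeringMatrix_apply,
    centeringMatrix_mul_apply, Finset.sum_sub_distrib, ← Finset.mul_sum, hcol, hdiag]
  ring

end DoubleCentering

theorem stmt8_general (n : ℕ)
    (D : Matrix (Fin n) (Fin n) ℝ) (hsym : D.IsSymm)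
    (hdiag : ∀ i, D i i = 0)
    (hpsd : (doubleCenter D).PosSemidef) :
    ∃ y : Fin n → EuclideanSpace ℝ (Fin (doubleCenter D).rank),
      (∀ i j, ‖y i - y j‖ ^ 2 = D i j) ∧ ∑ i, y i = 0 := by
  obtain ⟨y, hy⟩ := hpsd.exists_gram_eq
  refine ⟨y, fun i j => ?_, ?_⟩
  · rw [norm_sub_sq_eq_gram, hy, doubleCenter_diag_add_diag_sub_two_mul hsym hdiag]
  · rw [← inner_self_eq_zero (𝕜 := ℝ), ← sum_sum_gram, hy, sum_sum_doubleCenter]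

theorem stmt8 (n : ℕ) (hn : 0 < n)
    (D : Matrix (Fin n) (Fin n) ℝ) (hsym : D.IsSymm)
    (hdiag : ∀ i, D i i = 0)
    (hpsd : (doubleCenter D).PosSemidef) :
    ∃ y : Fin n → EuclideanSpace ℝ (Fin (doubleCenter D).rank),
      (∀ i j, ‖y i - y j‖ ^ 2 = D i j) ∧ ∑ i, y i = 0 :=
  stmt8_general n D hsym hdiag hpsd
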